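/- Let a, b, a₁, b₁ ∈ ℝ with b ≠ 0 and b₁ ≠ 0. Let f ∈ ℝ[[X]] have constant term 0 and be the compositional inverse of f̄ = X·(1 + aX + bX²)⁻¹ (i.e., f̄∘f = X), and set g = (1 − a₁X − b₁X·f)⁻¹. Let h = (g∘f̄)⁻¹, so that (h, f̄) = (g,f)⁻¹ in the Riordan group, and define p_n(X) = ∑_{k=0}^{n} ([Xⁿ](h·f̄ᵏ))·Xᵏ ∈ ℝ[X]. Then p_0 = 1, p_1 = X − a₁, p_2 = (X − a)·p_1 − b₁·p_0, and p_{n+1} = (X − a)·p_n − b·p_{n−1} for all n ≥ 2. (That is, if the Riordan array L = (g,f) has tridiagonal production matrix with diagonal a₁,a,a,..., subdiagonal b₁,b,b,..., then L⁻¹ is the coefficient array of a family of monic orthogonal polynomials satisfying this three-term recurrence.) -/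

import Mathlib

/-!
With `D = 1 + aX + bX²` we have `f̄ = X / D`. A left compositional inverse is also a right one,
so `f ∘ f̄ = X`, hence `g ∘ f̄ = 1 / (1 - a₁ f̄ - b₁ X f̄)` and the first column of `(g, f)⁻¹` is
`h = 1 - a₁ f̄ - b₁ X f̄`; thus `D h = 1 + (a - a₁) X + (b - b₁) X²`. The other columns satisfy
`D · h f̄ᵏ⁺¹ = X · h f̄ᵏ`. Comparing coefficients of `Xⁿ⁺²` in these identities column by column
gives `pₙ₊₂ = (X - a) pₙ₊₁ - b pₙ + [Xⁿ⁺²](D h)` and `p₁ = (X - a) p₀ + [X](D h)`, where `D h`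
is a polynomial of degree two.
-/

/-- Substitution (composition) of formal power series: `psComp h u = h ∘ u`,
the series obtained by substituting `u` (with zero constant term) into `h`. -/
noncomputable def psComp (h u : PowerSeries ℝ) : PowerSeries ℝ :=
  PowerSeries.mk fun n =>
    ∑ k ∈ Finset.range (n + 1), PowerSeries.coeff k h * PowerSeries.coeff n (u ^ k)

open PowerSeries Finset

theorem coeff_pow_eq_zero_of_lt {R : Type*} [CommRing R] {u : R⟦X⟧} (hu : constantCoeff u = 0)
    {n d : ℕ} (hnd : n < d) : coeff n (u ^ d) = 0 :=
  X_pow_dvd_iff.mp (pow_dvd_pow_of_dvd (X_dvd_iff.mpr hu) d) n hnd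

theorem psComp_eq_subst {h u : ℝ⟦X⟧} (hu : constantCoeff u = 0) : psComp h u = h.subst u := by
  ext n
  rw [psComp, coeff_mk, coeff_subst' (HasSubst.of_constantCoeff_zero' hu),
    finsum_eq_sum_of_support_subset (s := range (n + 1))]
  · rfl
  · intro d hd
    rw [coe_range, Set.mem_Iio, Nat.lt_succ_iff]
    by_contra! hnd
    exact hd (by simp [coeff_pow_eq_zero_of_lt hu hnd])

theorem subst_eq_X_comm {R : Type*} [CommRing R] {P f : R⟦X⟧} (hP : constantCoeff P = 0)
    (hP₁ : IsUnit (coeff 1 P)) (hf : constantCoeff f = 0) (h : P.subst f = X) :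
    f.subst P = X := by
  have hf' := HasSubst.of_constantCoeff_zero' hf
  have hQ : P.substInvOfIsUnit hP₁ = f :=
    calc P.substInvOfIsUnit hP₁ = (P.substInvOfIsUnit hP₁).subst (P.subst f) := by
          rw [h, X_subst]
      _ = subst f ((P.substInvOfIsUnit hP₁).subst P) := by
          rw [subst_comp_subst_apply (HasSubst.of_constantCoeff_zero' hP) hf']
      _ = f := by rw [subst_substInvOfIsUnit_left _ hP, subst_X hf']
  rw [← hQ, subst_substInvOfIsUnit_left _ hP]

theorem inv_subst_inv {k : Type*} [Field k] {u : k⟦X⟧} (hu : HasSubst u) {w : k⟦X⟧}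
    (hw : constantCoeff w ≠ 0) : (w⁻¹.subst u)⁻¹ = w.subst u := by
  have hmul : w.subst u * w⁻¹.subst u = 1 := by
    rw [← subst_mul hu, PowerSeries.mul_inv_cancel w hw, ← coe_substAlgHom hu, map_one]
  rw [PowerSeries.inv_eq_iff_mul_eq_one]
  · exact hmul
  · exact right_ne_zero_of_mul_eq_one (by rw [← map_mul, hmul, map_one])

theorem inv_psComp_inv_of_subst_eq_X {a₁ b₁ : ℝ} {f fbar : ℝ⟦X⟧} (hf0 : constantCoeff f = 0)
    (hfbar0 : constantCoeff fbar = 0) (hffbar : f.subst fbar = X) :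
    (psComp (1 - C a₁ * X - C b₁ * X * f)⁻¹ fbar)⁻¹ = 1 - C a₁ * fbar - C b₁ * X * fbar := by
  have hs := HasSubst.of_constantCoeff_zero' hfbar0
  -- `subst_C` produces `MvPowerSeries.C r`, which `simp` does not identify with `C r`
  have hC (r : ℝ) : (C r).subst fbar = C r := subst_C r
  rw [psComp_eq_subst hfbar0, inv_subst_inv hs (by simp [hf0]), ← coe_substAlgHom hs]
  simp only [map_sub, map_mul, map_one, substAlgHom_X, coe_substAlgHom, hffbar, hC]
  ring

section RowPolynomials

variable {R : Type*} [CommRing R]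

theorem coeff_zero_quadratic_mul (a b : R) (φ : R⟦X⟧) :
    coeff 0 ((1 + C a * X + C b * X ^ 2) * φ) = coeff 0 φ := by
  simp [add_mul, mul_assoc]

theorem coeff_one_quadratic_mul (a b : R) (φ : R⟦X⟧) :
    coeff 1 ((1 + C a * X + C b * X ^ 2) * φ) = coeff 1 φ + a * coeff 0 φ := by
  simp [add_mul, mul_assoc, coeff_X_pow_mul']

theorem coeff_add_two_quadratic_mul (a b : R) (φ : R⟦X⟧) (n : ℕ) :
    coeff (n + 2) ((1 + C a * X + C b * X ^ 2) * φ) =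
      coeff (n + 2) φ + a * coeff (n + 1) φ + b * coeff n φ := by
  simp [add_mul, mul_assoc, coeff_X_pow_mul']

noncomputable def rowPoly (c : ℕ → R⟦X⟧) (n : ℕ) : Polynomial R :=
  ∑ k ∈ range (n + 1), Polynomial.C (coeff n (c k)) * Polynomial.X ^ k

variable {c : ℕ → R⟦X⟧}

theorem rowPoly_zero (a b : R) :
    rowPoly c 0 = Polynomial.C (coeff 0 ((1 + C a * X + C b * X ^ 2) * c 0)) := by
  simp [rowPoly, coeff_zero_quadratic_mul]

variable {a b : R} (hc : ∀ k, X ^ k ∣ c k)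
include hc

theorem coeff_rowPoly (n k : ℕ) : (rowPoly c n).coeff k = coeff n (c k) := by
  simp only [rowPoly, Polynomial.finsetSum_coeff, Polynomial.coeff_C_mul_X_pow, sum_ite_eq,
    mem_range]
  split_ifs with hk
  · rfl
  · exact (X_pow_dvd_iff.mp (hc k) n (by omega)).symm

variable (hcol : ∀ k, (1 + C a * X + C b * X ^ 2) * c (k + 1) = X * c k)
include hcol

theorem rowPoly_one : rowPoly c 1 = (Polynomial.X - Polynomial.C a) * rowPoly c 0 +
    Polynomial.C (coeff 1 ((1 + C a * X + C b * X ^ 2) * c 0)) := by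
  have hvan : ∀ {n k}, n < k → coeff n (c k) = 0 := fun h => X_pow_dvd_iff.mp (hc _) _ h
  have hc₁ := congrArg (coeff 1) (hcol 0)
  rw [coeff_one_quadratic_mul, coeff_succ_X_mul, hvan (Nat.lt_add_one 0), mul_zero,
    add_zero] at hc₁
  ext (_ | _ | k) <;>
    simp only [sub_mul, Polynomial.coeff_add, Polynomial.coeff_sub, Polynomial.coeff_C_mul,
      Polynomial.coeff_X_mul, Polynomial.coeff_X_mul_zero, Polynomial.coeff_C, coeff_rowPoly hc,
      coeff_one_quadratic_mul]
  · simp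
  · simp [hc₁, hvan]
  · simp [hvan]

theorem rowPoly_add_two (n : ℕ) :
    rowPoly c (n + 2) = (Polynomial.X - Polynomial.C a) * rowPoly c (n + 1) -
      Polynomial.C b * rowPoly c n +
      Polynomial.C (coeff (n + 2) ((1 + C a * X + C b * X ^ 2) * c 0)) := by
  ext (_ | k) <;>
    simp only [sub_mul, Polynomial.coeff_add, Polynomial.coeff_sub, Polynomial.coeff_C_mul,
      Polynomial.coeff_X_mul, Polynomial.coeff_X_mul_zero, Polynomial.coeff_C, coeff_rowPoly hc,
      coeff_add_two_quadratic_mul]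
  · simp
  · have hck := congrArg (coeff (n + 2)) (hcol k)
    rw [coeff_add_two_quadratic_mul, coeff_succ_X_mul] at hck
    rw [if_neg (Nat.add_one_ne_zero k), add_zero]
    linear_combination hck

end RowPolynomials

theorem riordan_tridiagonal_inverse_orthogonal_general (a b a₁ b₁ : ℝ)
    (f fbar g h : PowerSeries ℝ)
    (hfbar : fbar = PowerSeries.X *
      (1 + PowerSeries.C a * PowerSeries.X + PowerSeries.C b * PowerSeries.X ^ 2)⁻¹)
    (hf0 : PowerSeries.constantCoeff f = 0)
    (hfinv : psComp fbar f = PowerSeries.X)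
    (hg : g = (1 - PowerSeries.C a₁ * PowerSeries.X -
      PowerSeries.C b₁ * PowerSeries.X * f)⁻¹)
    (hh : h = (psComp g fbar)⁻¹)
    (p : ℕ → Polynomial ℝ)
    (hp : ∀ n, p n = ∑ k ∈ Finset.range (n + 1),
      Polynomial.C (PowerSeries.coeff n (h * fbar ^ k)) * Polynomial.X ^ k) :
    p 0 = 1 ∧
    p 1 = Polynomial.X - Polynomial.C a₁ ∧
    p 2 = (Polynomial.X - Polynomial.C a) * p 1 - Polynomial.C b₁ * p 0 ∧
    (∀ n, 2 ≤ n →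
      p (n + 1) = (Polynomial.X - Polynomial.C a) * p n - Polynomial.C b * p (n - 1)) := by
  set D : ℝ⟦X⟧ := 1 + C a * X + C b * X ^ 2
  have hD : D * fbar = X := by
    rw [hfbar, mul_left_comm, PowerSeries.mul_inv_cancel _ (by simp [D]), mul_one]
  have hfbar0 : constantCoeff fbar = 0 := by simp [hfbar]
  have hfbar1 : coeff 1 fbar = 1 := by simp [hfbar, coeff_succ_X_mul, D]
  have hffbar : f.subst fbar = X :=
    subst_eq_X_comm hfbar0 (by simp [hfbar1]) hf0 (by rwa [← psComp_eq_subst hf0])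
  have hDh : D * h = 1 + C (a - a₁) * X + C (b - b₁) * X ^ 2 := by
    rw [hh, hg, inv_psComp_inv_of_subst_eq_X hf0 hfbar0 hffbar, map_sub, map_sub]
    linear_combination (-C a₁ - C b₁ * X) * hD
  have hc : ∀ k, X ^ k ∣ h * fbar ^ k := fun k =>
    dvd_mul_of_dvd_right (pow_dvd_pow_of_dvd (X_dvd_iff.mpr hfbar0) k) h
  have hcol : ∀ k, D * (h * fbar ^ (k + 1)) = X * (h * fbar ^ k) := fun k => by
    linear_combination (h * fbar ^ k) * hD
  obtain rfl : p = rowPoly (fun k => h * fbar ^ k) := funext hp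
  refine ⟨?_, ?_, ?_, fun n hn => ?_⟩
  · rw [rowPoly_zero a b, pow_zero, mul_one, hDh]
    simp
  · rw [rowPoly_one hc hcol, rowPoly_zero a b, pow_zero, mul_one, hDh]
    simp [coeff_X_pow, coeff_one, sub_mul]
  · rw [rowPoly_add_two hc hcol, rowPoly_zero a b, pow_zero, mul_one, hDh]
    simp [coeff_X_pow, coeff_one, sub_mul]
  · obtain ⟨m, rfl⟩ := Nat.exists_eq_add_of_le' hn
    rw [rowPoly_add_two hc hcol, pow_zero, mul_one, hDh]
    simp [coeff_X_pow, coeff_one, sub_mul]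

/-- If the Riordan array `L = (g, f)` has tridiagonal production matrix with diagonal
`a₁, a, a, …` and subdiagonal `b₁, b, b, …`, then `L⁻¹ = (1/(g∘f̄), f̄)` is the
coefficient array of a family of monic orthogonal polynomials satisfying the
corresponding three-term recurrence. -/
theorem riordan_tridiagonal_inverse_orthogonal (a b a₁ b₁ : ℝ) (hb : b ≠ 0) (hb₁ : b₁ ≠ 0)
    (f fbar g h : PowerSeries ℝ)
    (hfbar : fbar = PowerSeries.X *
      (1 + PowerSeries.C a * PowerSeries.X + PowerSeries.C b * PowerSeries.X ^ 2)⁻¹)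
    (hf0 : PowerSeries.constantCoeff f = 0)
    (hfinv : psComp fbar f = PowerSeries.X)
    (hg : g = (1 - PowerSeries.C a₁ * PowerSeries.X -
      PowerSeries.C b₁ * PowerSeries.X * f)⁻¹)
    (hh : h = (psComp g fbar)⁻¹)
    (p : ℕ → Polynomial ℝ)
    (hp : ∀ n, p n = ∑ k ∈ Finset.range (n + 1),
      Polynomial.C (PowerSeries.coeff n (h * fbar ^ k)) * Polynomial.X ^ k) :
    p 0 = 1 ∧
    p 1 = Polynomial.X - Polynomial.C a₁ ∧
    p 2 = (Polynomial.X - Polynomial.C a) * p 1 - Polynomial.C b₁ * p 0 ∧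
    (∀ n, 2 ≤ n →
      p (n + 1) = (Polynomial.X - Polynomial.C a) * p n - Polynomial.C b * p (n - 1)) :=
  riordan_tridiagonal_inverse_orthogonal_general a b a₁ b₁ f fbar g h hfbar hf0 hfinv hg hh p hp
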